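/- arXiv:2211.11027 — 3 statements merged into one kernel-verified Lean document; each statement's English description precedes it below -/
import Mathlib

section
/- (Lemma 1, set of models consistent with the data.) Consider the discrete-time linear system x(t+1) = A x(t) + B u(t) + w(t), y(t) = x(t) + v(t), with data matrices Y₋, Y₊, U₋ and noise realization matrices V₋, V₊, W₋ from a trajectory of length T+1. Suppose W₋ ∈ M_w, V₊ ∈ M_v, A V₋ ∈ M_{Av} for given sets M_w, M_v, M_{Av} ⊆ ℝ^{n×T}, and suppose the stacked data matrix D = [Y₋; U₋] ∈ ℝ^{(n+m)×T} admits a right inverse, i.e., there exists G ∈ ℝ^{T×(n+m)} with D·G = I_{n+m}. Then [A B] ∈ ({Y₊} ⊕ (−M_w) ⊕ (−M_v) ⊕ M_{Av})·G := { M·G : M ∈ {Y₊} ⊕ (−M_w) ⊕ (−M_v) ⊕ M_{Av} }. -/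
open Pointwise

/-!
Each column of the data obeys `y(t+1) = A y(t) + B u(t) + w(t) + v(t+1) - A v(t)`, so
`[A B] [Y₋; U₋] = Y₊ - W₋ - V₊ + A V₋`, a matrix of the Minkowski sum. Multiplying on the
right by the right inverse `G` of `[Y₋; U₋]` recovers `[A B]`.
-/

namespace Matrix

variable {R : Type*} [Semiring R] {l n p : Type*} [Fintype n] [Fintype p] [DecidableEq n]

theorem mem_image_mul_of_mul_mem_of_mul_eq_one {S : Set (Matrix l p R)} {M : Matrix l n R}
    {D : Matrix n p R} {G : Matrix p n R} (hMD : M * D ∈ S) (hG : D * G = 1) :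
    M ∈ (fun N => N * G) '' S :=
  ⟨M * D, hMD, show M * D * G = M by rw [Matrix.mul_assoc, hG, Matrix.mul_one]⟩

end Matrix

section LinearSystem

open Matrix

variable {R : Type*} [CommRing R] {ι κ : Type*} [Fintype ι] [Fintype κ]
  {A : Matrix ι ι R} {B : Matrix ι κ R} {x w v y : ℕ → ι → R} {u : ℕ → κ → R}

theorem mulVec_output_add_mulVec_input (hx : ∀ t, x (t + 1) = A *ᵥ x t + B *ᵥ u t + w t)
    (hy : ∀ t, y t = x t + v t) (t : ℕ) :
    A *ᵥ y t + B *ᵥ u t = y (t + 1) + -w t + -v (t + 1) + A *ᵥ v t := by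
  rw [hy, hy, hx, mulVec_add]
  abel

theorem fromCols_mul_fromRows_eq_of_trajectory {τ : Type*} [Fintype τ]
    {Ym Yp Vm Vp Wm : Matrix ι τ R} {Um : Matrix κ τ R} (ν : τ → ℕ)
    (hx : ∀ t, x (t + 1) = A *ᵥ x t + B *ᵥ u t + w t) (hy : ∀ t, y t = x t + v t)
    (hYm : ∀ i k, Ym i k = y (ν k) i) (hYp : ∀ i k, Yp i k = y (ν k + 1) i)
    (hVm : ∀ i k, Vm i k = v (ν k) i) (hVp : ∀ i k, Vp i k = v (ν k + 1) i)
    (hWm : ∀ i k, Wm i k = w (ν k) i) (hUm : ∀ i k, Um i k = u (ν k) i) :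
    fromCols A B * fromRows Ym Um = Yp + -Wm + -Vp + A * Vm := by
  rw [fromCols_mul_fromRows]
  ext i k
  have hcol := congrFun (mulVec_output_add_mulVec_input hx hy (ν k)) i
  simp only [Matrix.add_apply, Matrix.neg_apply, Matrix.mul_apply, Pi.add_apply, Pi.neg_apply,
    mulVec, dotProduct, hYm, hYp, hVm, hVp, hWm, hUm] at hcol ⊢
  exact hcol

end LinearSystem

/-- Lemma 1: for the system `x(t+1) = A x(t) + B u(t) + w(t)`,
`y(t) = x(t) + v(t)`, with data matrices from a trajectory of length `T+1`, if
`W₋ ∈ M_w`, `V₊ ∈ M_v`, `A V₋ ∈ M_{Av}`, and the stacked data matrix `D = [Y₋; U₋]`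
admits a right inverse `G` (`D·G = I`), then
`[A B] ∈ ({Y₊} ⊕ (−M_w) ⊕ (−M_v) ⊕ M_{Av})·G`. -/
theorem AB_mem_consistent_model_set {n m T : ℕ}
    (A : Matrix (Fin n) (Fin n) ℝ) (B : Matrix (Fin n) (Fin m) ℝ)
    (x w v y : ℕ → Fin n → ℝ) (u : ℕ → Fin m → ℝ)
    (hx : ∀ t, x (t + 1) = A.mulVec (x t) + B.mulVec (u t) + w t)
    (hy : ∀ t, y t = x t + v t)
    (Ym Yp Vm Vp Wm : Matrix (Fin n) (Fin T) ℝ) (Um : Matrix (Fin m) (Fin T) ℝ)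
    (hYm : ∀ i (k : Fin T), Ym i k = y k i)
    (hYp : ∀ i (k : Fin T), Yp i k = y (k + 1) i)
    (hVm : ∀ i (k : Fin T), Vm i k = v k i)
    (hVp : ∀ i (k : Fin T), Vp i k = v (k + 1) i)
    (hWm : ∀ i (k : Fin T), Wm i k = w k i)
    (hUm : ∀ i (k : Fin T), Um i k = u k i)
    (Mw Mv MAv : Set (Matrix (Fin n) (Fin T) ℝ))
    (hW : Wm ∈ Mw) (hV : Vp ∈ Mv) (hAV : A * Vm ∈ MAv)
    (G : Matrix (Fin T) (Fin n ⊕ Fin m) ℝ)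
    (hG : Matrix.fromRows Ym Um * G = 1) :
    Matrix.fromCols A B ∈
      (fun M => M * G) ''
        (({Yp} : Set (Matrix (Fin n) (Fin T) ℝ)) + (-Mw) + (-Mv) + MAv) := by
  refine Matrix.mem_image_mul_of_mul_mem_of_mul_eq_one ?_ hG
  rw [fromCols_mul_fromRows_eq_of_trajectory (fun k : Fin T => (k : ℕ)) hx hy
    hYm hYp hVm hVp hWm hUm]
  exact Set.add_mem_add (Set.add_mem_add (Set.add_mem_add rfl (Set.neg_mem_neg.mpr hW))
    (Set.neg_mem_neg.mpr hV)) hAV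
end

section
/- (Lemma 2, N-step data-driven reachability over-approximation.) Consider the system x(t+1) = A x(t) + B u(t) + w(t), y(t) = x(t) + v(t). Let M_Σ ⊆ ℝ^{n×(n+m)} satisfy [A B] ∈ M_Σ, and let Z_{u,t} ⊆ ℝ^m (t ∈ ℕ), Z_w, Z_v, Z_{Av} ⊆ ℝ^n be given sets. Define the sets R̂_t ⊆ ℝ^n recursively by R̂_0 = {y(0)} and R̂_{t+1} = { M·(yᵀ, uᵀ)ᵀ : M ∈ M_Σ, y ∈ R̂_t, u ∈ Z_{u,t} } ⊕ Z_w ⊕ Z_v ⊕ (−Z_{Av}). If for all t ≥ 0 one has u(t) ∈ Z_{u,t}, w(t) ∈ Z_w, v(t) ∈ Z_v, and A v(t) ∈ Z_{Av}, then y(N) ∈ R̂_N for every N ∈ ℕ; in particular the true reachable set at time N is contained in R̂_N. -/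
/-!
Eliminating the state via `x = y - v`, one step of the system reads
`y(t+1) = [A B] (y(t), u(t)) + w(t) + v(t+1) - A v(t)`, and each summand lies in the
corresponding set of the recursion; induction on `N` concludes.
-/

open Pointwise Matrix

section

variable {R ι κ : Type*} [Ring R] [Fintype ι] [Fintype κ]

theorem output_succ_eq_fromCols_mulVec (A : Matrix ι ι R) (B : Matrix ι κ R)
    {x₀ x₁ y₀ y₁ w v₀ v₁ : ι → R} (u : κ → R)
    (hx : x₁ = A *ᵥ x₀ + B *ᵥ u + w) (hy₀ : y₀ = x₀ + v₀) (hy₁ : y₁ = x₁ + v₁) :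
    y₁ = fromCols A B *ᵥ Sum.elim y₀ u + w + v₁ + -(A *ᵥ v₀) := by
  rw [fromCols_mulVec_sumElim, hy₁, hx, hy₀, mulVec_add]
  abel

theorem output_succ_mem_of_output_mem {A : Matrix ι ι R} {B : Matrix ι κ R}
    {x₀ x₁ y₀ y₁ w v₀ v₁ : ι → R} {u : κ → R}
    {Msig : Set (Matrix ι (ι ⊕ κ) R)} {S Zw Zv ZAv : Set (ι → R)} {Zu : Set (κ → R)}
    (hx : x₁ = A *ᵥ x₀ + B *ᵥ u + w) (hy₀ : y₀ = x₀ + v₀) (hy₁ : y₁ = x₁ + v₁)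
    (hAB : fromCols A B ∈ Msig) (hy₀S : y₀ ∈ S) (hu : u ∈ Zu) (hw : w ∈ Zw) (hv₁ : v₁ ∈ Zv)
    (hAv₀ : A *ᵥ v₀ ∈ ZAv) :
    y₁ ∈ {z | ∃ M ∈ Msig, ∃ yv ∈ S, ∃ uv ∈ Zu, z = M *ᵥ Sum.elim yv uv} + Zw + Zv + -ZAv := by
  rw [output_succ_eq_fromCols_mulVec A B u hx hy₀ hy₁]
  exact Set.add_mem_add (Set.add_mem_add (Set.add_mem_add ⟨_, hAB, _, hy₀S, _, hu, rfl⟩ hw) hv₁)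
    (Set.neg_mem_neg.mpr hAv₀)

end

/-- Lemma 2, N-step data-driven reachability over-approximation: for the
system `x(t+1) = A x(t) + B u(t) + w(t)`, `y(t) = x(t) + v(t)`, with `[A B] ∈ M_Σ`, define
`R̂_0 = {y(0)}` and
`R̂_{t+1} = {M·(yᵀ,uᵀ)ᵀ : M ∈ M_Σ, y ∈ R̂_t, u ∈ Z_{u,t}} ⊕ Z_w ⊕ Z_v ⊕ (−Z_{Av})`.
If for all `t` one has `u(t) ∈ Z_{u,t}`, `w(t) ∈ Z_w`, `v(t) ∈ Z_v`, and
`A v(t) ∈ Z_{Av}`, then `y(N) ∈ R̂_N` for every `N`. -/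
theorem N_step_reachability_over_approximation {n m : ℕ}
    (A : Matrix (Fin n) (Fin n) ℝ) (B : Matrix (Fin n) (Fin m) ℝ)
    (x w v y : ℕ → Fin n → ℝ) (u : ℕ → Fin m → ℝ)
    (hx : ∀ t, x (t + 1) = A.mulVec (x t) + B.mulVec (u t) + w t)
    (hy : ∀ t, y t = x t + v t)
    (Msig : Set (Matrix (Fin n) (Fin n ⊕ Fin m) ℝ))
    (hAB : Matrix.fromCols A B ∈ Msig)
    (Zu : ℕ → Set (Fin m → ℝ)) (Zw Zv ZAv : Set (Fin n → ℝ))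
    (R : ℕ → Set (Fin n → ℝ))
    (hR0 : R 0 = {y 0})
    (hRsucc : ∀ t, R (t + 1) =
      {z : Fin n → ℝ | ∃ M ∈ Msig, ∃ yv ∈ R t, ∃ uv ∈ Zu t, z = M.mulVec (Sum.elim yv uv)}
        + Zw + Zv + (-ZAv))
    (hu : ∀ t, u t ∈ Zu t) (hw : ∀ t, w t ∈ Zw) (hv : ∀ t, v t ∈ Zv)
    (hAv : ∀ t, A.mulVec (v t) ∈ ZAv) :
    ∀ N : ℕ, y N ∈ R N := by
  intro N
  induction N with
  | zero => simp [hR0]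
  | succ t ih =>
    rw [hRsucc]
    exact output_succ_mem_of_output_mem (hx t) (hy t) (hy (t + 1)) hAB ih (hu t) (hw t) (hv (t + 1))
      (hAv t)
end

section
/- (Safety guarantee, core of Theorem 1.) Consider the system x(t+1) = A x(t) + B u(t) + w(t), y(t) = x(t) + v(t), with [A B] ∈ M_Σ ⊆ ℝ^{n×(n+m)}, and define R̂_0 = {y(0)} and R̂_{t+1} = { M·(yᵀ, uᵀ)ᵀ : M ∈ M_Σ, y ∈ R̂_t, u ∈ Z_{u,t} } ⊕ Z_w ⊕ Z_v ⊕ (−Z_{Av}). Suppose for all t the applied input satisfies u(t) ∈ Z_{u,t}, and the noises satisfy w(t) ∈ Z_w, v(t) ∈ Z_v, A v(t) ∈ Z_{Av}. Let Y_obs ⊆ ℝ^n denote the unsafe (obstacle) region, and suppose R̂_k ∩ Y_obs = ∅ for all k = 0, …, N. Then y(k) ∉ Y_obs for all k = 0, …, N; i.e., the executed trajectory avoids the obstacles over the planning horizon. -/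
open Pointwise

/-!
The measured output obeys `y(t+1) = [A B] (y(t), u(t)) + w(t) + v(t+1) - A v(t)`: the measurement
noise `v(t)` enters `y(t)` and is propagated by `A`, which the term `-Z_{Av}` compensates. Since
`[A B] ∈ M_Σ`, induction gives `y(t) ∈ R̂_t` for every `t`, and `R̂_k` misses the obstacles.
-/

section OutputRecursion

variable {K ι κ : Type*} [CommRing K] [Fintype ι] [Fintype κ]
  (A : Matrix ι ι K) (B : Matrix ι κ K) (x w v y : ℕ → ι → K) (u : ℕ → κ → K)

theorem output_succ_eq_fromCols_mulVec_s9
    (hx : ∀ t, x (t + 1) = A.mulVec (x t) + B.mulVec (u t) + w t)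
    (hy : ∀ t, y t = x t + v t) (t : ℕ) :
    y (t + 1) = (Matrix.fromCols A B).mulVec (Sum.elim (y t) (u t)) + w t + v (t + 1)
      + -A.mulVec (v t) := by
  rw [Matrix.fromCols_mulVec_sumElim, hy (t + 1), hx t, hy t, Matrix.mulVec_add]
  abel

theorem output_mem_reachSet
    (hx : ∀ t, x (t + 1) = A.mulVec (x t) + B.mulVec (u t) + w t)
    (hy : ∀ t, y t = x t + v t)
    (Msig : Set (Matrix ι (ι ⊕ κ) K)) (hAB : Matrix.fromCols A B ∈ Msig)
    (Zu : ℕ → Set (κ → K)) (Zw Zv ZAv : Set (ι → K)) (R : ℕ → Set (ι → K))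
    (hR0 : R 0 = {y 0})
    (hRsucc : ∀ t, R (t + 1) =
      {z | ∃ M ∈ Msig, ∃ yv ∈ R t, ∃ uv ∈ Zu t, z = M.mulVec (Sum.elim yv uv)}
        + Zw + Zv + (-ZAv))
    (hu : ∀ t, u t ∈ Zu t) (hw : ∀ t, w t ∈ Zw) (hv : ∀ t, v t ∈ Zv)
    (hAv : ∀ t, A.mulVec (v t) ∈ ZAv) (t : ℕ) :
    y t ∈ R t := by
  induction t with
  | zero => simp [hR0]
  | succ t ih =>
    rw [hRsucc, output_succ_eq_fromCols_mulVec_s9 A B x w v y u hx hy t]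
    have hnominal : (Matrix.fromCols A B).mulVec (Sum.elim (y t) (u t)) ∈
        {z | ∃ M ∈ Msig, ∃ yv ∈ R t, ∃ uv ∈ Zu t, z = M.mulVec (Sum.elim yv uv)} :=
      ⟨_, hAB, _, ih, _, hu t, rfl⟩
    exact Set.add_mem_add (Set.add_mem_add (Set.add_mem_add hnominal (hw t)) (hv (t + 1)))
      (Set.neg_mem_neg.mpr (hAv t))

end OutputRecursion

/-- safety guarantee, core of Theorem 1: for the system
`x(t+1) = A x(t) + B u(t) + w(t)`, `y(t) = x(t) + v(t)`, with `[A B] ∈ M_Σ`, define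
`R̂_0 = {y(0)}` and
`R̂_{t+1} = {M·(yᵀ,uᵀ)ᵀ : M ∈ M_Σ, y ∈ R̂_t, u ∈ Z_{u,t}} ⊕ Z_w ⊕ Z_v ⊕ (−Z_{Av})`.
If for all `t` the applied input and noises satisfy `u(t) ∈ Z_{u,t}`, `w(t) ∈ Z_w`,
`v(t) ∈ Z_v`, `A v(t) ∈ Z_{Av}`, and `R̂_k ∩ Y_obs = ∅` for all `k = 0, …, N`, then
`y(k) ∉ Y_obs` for all `k = 0, …, N`. -/
theorem safety_guarantee {n m : ℕ}
    (A : Matrix (Fin n) (Fin n) ℝ) (B : Matrix (Fin n) (Fin m) ℝ)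
    (x w v y : ℕ → Fin n → ℝ) (u : ℕ → Fin m → ℝ)
    (hx : ∀ t, x (t + 1) = A.mulVec (x t) + B.mulVec (u t) + w t)
    (hy : ∀ t, y t = x t + v t)
    (Msig : Set (Matrix (Fin n) (Fin n ⊕ Fin m) ℝ))
    (hAB : Matrix.fromCols A B ∈ Msig)
    (Zu : ℕ → Set (Fin m → ℝ)) (Zw Zv ZAv : Set (Fin n → ℝ))
    (R : ℕ → Set (Fin n → ℝ))
    (hR0 : R 0 = {y 0})
    (hRsucc : ∀ t, R (t + 1) =
      {z : Fin n → ℝ | ∃ M ∈ Msig, ∃ yv ∈ R t, ∃ uv ∈ Zu t, z = M.mulVec (Sum.elim yv uv)}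
        + Zw + Zv + (-ZAv))
    (hu : ∀ t, u t ∈ Zu t) (hw : ∀ t, w t ∈ Zw) (hv : ∀ t, v t ∈ Zv)
    (hAv : ∀ t, A.mulVec (v t) ∈ ZAv)
    (Yobs : Set (Fin n → ℝ)) (N : ℕ)
    (hsafe : ∀ k ≤ N, R k ∩ Yobs = ∅) :
    ∀ k ≤ N, y k ∉ Yobs := by
  intro k hk
  have hmem : y k ∈ R k :=
    output_mem_reachSet A B x w v y u hx hy Msig hAB Zu Zw Zv ZAv R hR0 hRsucc hu hw hv hAv k
  exact (Set.disjoint_iff_inter_eq_empty.mpr (hsafe k hk)).notMem_of_mem_left hmem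
end
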